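/- In the m ≥ 3 elliptic m-fold point case with coordinates as in (†), the rational differential ω₀ = dt₁/t₁² + ⋯ + dt_{m−1}/t_{m−1}² − dt_m/t_m² on the normalization satisfies Σ_{i=1}^m Res_{p_i}((π*f)·ω₀) = 0 for every f in the local ring of C at p, i.e. ω₀ is a local generator of ω_C at the elliptic m-fold point. -/

import Mathlib

/-- The complete local ring of the elliptic `m`-fold point inside its
normalization `k[[t₁]] × ⋯ × k[[t_m]]`, in the standard coordinates (†):
for `m ≥ 3` it is generated by the functions `tᵢ ⊕ t_m` (`1 ≤ i ≤ m−1`) and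
all functions vanishing to order `≥ 2` on each branch. -/
noncomputable def ellipticSubalgebra (k : Type) [Field k] (m : ℕ) :
    Subalgebra k (Fin m → PowerSeries k) :=
  Algebra.adjoin k
    ({g : Fin m → PowerSeries k | ∃ i : Fin (m - 1),
        g = fun j : Fin m =>
          if (j : ℕ) = (i : ℕ) ∨ (j : ℕ) = m - 1 then PowerSeries.X else 0}
      ∪ {g : Fin m → PowerSeries k |
          ∀ j : Fin m, g j ∈ (Ideal.span {PowerSeries.X}) ^ 2})

/-- The rational differential
`ω₀ = dt₁/t₁² + ⋯ + dt_{m−1}/t_{m−1}² − dt_m/t_m²`, encoded as the tuple of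
Laurent series coefficients `g₀ᵢ = t_i^{-2}` for `i < m` and `−t_m^{-2}` on
the last branch. -/
noncomputable def omega0 (k : Type) [Field k] (m : ℕ) :
    Fin m → LaurentSeries k :=
  fun i => HahnSeries.single (-2 : ℤ) (if (i : ℕ) = m - 1 then (-1 : k) else 1)

/-!
A function `f = (f_j)` on the branches lies in the local ring exactly when the `f_j` have a
common value at `p` and their linear coefficients `a_j` satisfy `a_1 + ⋯ + a_{m-1} = a_m`,
i.e. `∑ ε_j a_j = 0` with `ε_j` the signs in `ω₀`; since `∑ Res (f ω₀) = ∑ ε_j a_j`, this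
gives the residue condition for `ω₀`. Conversely, pairing a differential `g` with `t_i^e`
on a single branch (`e ≥ 2`), with `t_i ⊕ t_m` and with `1` shows that each `g_j` has a pole
of order at most two, that the `t_j⁻²` coefficients of `g_j` are `ε_j c` for a common `c`, and
that the residues of `g` add up to zero; these are precisely the conditions for `g / ω₀` to
lie in the local ring.
-/

open PowerSeries HahnSeries

section LaurentSeries

variable {k : Type} [Field k]

theorem coeff_ofPowerSeries_mul_single (f : PowerSeries k) (a d : ℤ) (c : k) :
    (ofPowerSeries ℤ k f * single a c).coeff d =
      if d - a < 0 then 0 else coeff (d - a).natAbs f * c := by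
  rw [coeff_mul_single, PowerSeries.coeff_coe]
  split_ifs <;> simp

theorem coeff_neg_one_ofPowerSeries_mul_single_neg_two (f : PowerSeries k) (c : k) :
    (ofPowerSeries ℤ k f * single (-2) c).coeff (-1) = coeff 1 f * c := by
  rw [coeff_ofPowerSeries_mul_single]
  norm_num

theorem eq_ofPowerSeries_mul_single_of_coeff_eq_zero (g : LaurentSeries k) (n : ℕ) {u : k}
    (hu : u ≠ 0) (hg : ∀ d < -(n : ℤ), g.coeff d = 0) :
    g = ofPowerSeries ℤ k (mk fun t => u⁻¹ * g.coeff (t - n)) * single (-(n : ℤ)) u := by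
  ext d
  rw [coeff_ofPowerSeries_mul_single]
  split_ifs with hd
  · exact hg d (by omega)
  · rw [coeff_mk, Int.natAbs_of_nonneg (by omega)]
    field_simp
    ring_nf

theorem sum_coeff_ofPowerSeries_single_mul {ι : Type*} [Fintype ι] [DecidableEq ι] (i : ι)
    (f : PowerSeries k) (g : ι → LaurentSeries k) (d : ℤ) :
    ∑ j, (ofPowerSeries ℤ k ((Pi.single i f : ι → PowerSeries k) j) * g j).coeff d =
      (ofPowerSeries ℤ k f * g i).coeff d := by
  rw [Fintype.sum_eq_single i fun j hj => by simp [hj]]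
  simp

end LaurentSeries

theorem mem_span_X_sq_iff {k : Type} [Field k] (f : PowerSeries k) :
    f ∈ Ideal.span {X} ^ 2 ↔ constantCoeff f = 0 ∧ coeff 1 f = 0 := by
  rw [Ideal.span_singleton_pow, Ideal.mem_span_singleton, X_pow_dvd_iff]
  refine ⟨fun h => ⟨by simpa using h 0 two_pos, h 1 one_lt_two⟩, fun ⟨h0, h1⟩ t ht => ?_⟩
  interval_cases t
  · simpa using h0
  · exact h1

section EllipticPoint

variable {k : Type} [Field k] {n : ℕ}

/-- The sign `ε_j` of `dt_j / t_j²` in `ω₀`. -/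
def ellipticSign (n : ℕ) (j : Fin (n + 1)) : k := if j = Fin.last n then -1 else 1

theorem omega0_eq_single (j : Fin (n + 1)) :
    omega0 k (n + 1) j = single (-2) (ellipticSign n j) := by
  simp [omega0, ellipticSign, Fin.ext_iff]

theorem ellipticSign_ne_zero (j : Fin (n + 1)) : ellipticSign (k := k) n j ≠ 0 := by
  unfold ellipticSign
  split_ifs <;> simp

theorem sum_ellipticSign_mul (a : Fin (n + 1) → k) :
    ∑ j, ellipticSign n j * a j = ∑ i : Fin n, a i.castSucc - a (Fin.last n) := by
  simp [Fin.sum_univ_castSucc, ellipticSign, Fin.castSucc_ne_last, sub_eq_add_neg]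

variable (k n) in
def coeffConditionSubalgebra : Subalgebra k (Fin (n + 1) → PowerSeries k) where
  carrier := {r | (∃ c, ∀ j, constantCoeff (r j) = c) ∧ ∑ j, ellipticSign n j * coeff 1 (r j) = 0}
  mul_mem' := by
    rintro x y ⟨⟨a, ha⟩, hx⟩ ⟨⟨b, hb⟩, hy⟩
    refine ⟨⟨a * b, fun j => by simp [ha, hb]⟩, ?_⟩
    simp only [Pi.mul_apply, coeff_one_mul, ha, hb, mul_add, ← mul_assoc, Finset.sum_add_distrib,
      ← Finset.sum_mul, hx, hy, zero_mul, add_zero]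
  add_mem' := by
    rintro x y ⟨⟨a, ha⟩, hx⟩ ⟨⟨b, hb⟩, hy⟩
    refine ⟨⟨a + b, fun j => by simp [ha, hb]⟩, ?_⟩
    simp only [Pi.add_apply, map_add, mul_add, Finset.sum_add_distrib, hx, hy, add_zero]
  algebraMap_mem' c := ⟨⟨c, fun j => by simp [Pi.algebraMap_apply]⟩, by simp [Pi.algebraMap_apply]⟩

theorem ite_or_eq_single_add_single (i : Fin n) :
    (fun j : Fin (n + 1) => if (j : ℕ) = (i : ℕ) ∨ (j : ℕ) = n + 1 - 1 then (X : PowerSeries k)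
      else 0) = Pi.single i.castSucc X + Pi.single (Fin.last n) X := by
  funext j
  induction j using Fin.lastCases with
  | last => simp [(Fin.castSucc_lt_last i).ne']
  | cast j => simp [Pi.single_apply, Fin.ext_iff, j.isLt.ne]

theorem single_add_single_mem_coeffConditionSubalgebra (i : Fin n) :
    Pi.single i.castSucc X + Pi.single (Fin.last n) X ∈ coeffConditionSubalgebra k n := by
  refine ⟨⟨0, fun j => ?_⟩, ?_⟩
  · simp [Pi.single_apply, apply_ite constantCoeff]
  · simp [sum_ellipticSign_mul, Pi.single_apply, apply_ite (coeff (R := k) 1),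
      (Fin.castSucc_lt_last i).ne']

theorem single_add_single_mem_ellipticSubalgebra (i : Fin n) :
    Pi.single i.castSucc X + Pi.single (Fin.last n) X ∈ ellipticSubalgebra k (n + 1) :=
  ite_or_eq_single_add_single (k := k) i ▸ Algebra.subset_adjoin (Or.inl ⟨⟨i, i.isLt⟩, rfl⟩)

theorem ellipticSubalgebra_le : ellipticSubalgebra k (n + 1) ≤ coeffConditionSubalgebra k n := by
  rw [ellipticSubalgebra, Algebra.adjoin_le_iff]
  rintro r (⟨⟨i, hi⟩, rfl⟩ | hr)
  · rw [ite_or_eq_single_add_single (n := n) ⟨i, hi⟩]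
    exact single_add_single_mem_coeffConditionSubalgebra _
  · simp only [mem_span_X_sq_iff] at hr
    exact ⟨⟨0, fun j => (hr j).1⟩, Finset.sum_eq_zero fun j _ => by rw [(hr j).2, mul_zero]⟩

theorem smul_X_mem_ellipticSubalgebra (a : Fin (n + 1) → k)
    (ha : ∑ j, ellipticSign n j * a j = 0) :
    (fun j => a j • X) ∈ ellipticSubalgebra k (n + 1) := by
  rw [sum_ellipticSign_mul, sub_eq_zero] at ha
  have : (fun j => a j • X) = ∑ i : Fin n, a i.castSucc •
      (Pi.single i.castSucc X + Pi.single (Fin.last n) X : Fin (n + 1) → PowerSeries k) := by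
    funext j
    induction j using Fin.lastCases with
    | last => simp [(Fin.castSucc_lt_last _).ne, ← ha, Finset.sum_smul]
    | cast j => simp [Pi.single_apply, (Fin.castSucc_lt_last j).ne]
  rw [this]
  exact sum_mem fun i _ => Subalgebra.smul_mem _ (single_add_single_mem_ellipticSubalgebra i) _

theorem coeffConditionSubalgebra_le :
    coeffConditionSubalgebra k n ≤ ellipticSubalgebra k (n + 1) := by
  rintro r ⟨⟨c, hc⟩, hr⟩
  have hq : r - algebraMap k _ c - (fun j => coeff 1 (r j) • X) ∈ ellipticSubalgebra k (n + 1) :=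
    Algebra.subset_adjoin <| Or.inr fun j => by
      simp [mem_span_X_sq_iff, Pi.algebraMap_apply, hc]
  convert add_mem (add_mem (algebraMap_mem _ c) (smul_X_mem_ellipticSubalgebra _ hr)) hq using 1
  abel

theorem ellipticSubalgebra_eq : ellipticSubalgebra k (n + 1) = coeffConditionSubalgebra k n :=
  le_antisymm ellipticSubalgebra_le coeffConditionSubalgebra_le

/-- Rosenlicht's description of `ω_C` at `p`: a rational differential on the normalization,
given by its Laurent expansions `g_j dt_j` on the branches, is regular when its residues against
every function of the local ring add up to zero. -/
def IsRosenlichtRegular (g : Fin (n + 1) → LaurentSeries k) : Prop :=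
  ∀ r ∈ ellipticSubalgebra k (n + 1), ∑ i, (ofPowerSeries ℤ k (r i) * g i).coeff (-1) = 0

theorem isRosenlichtRegular_omega0 : IsRosenlichtRegular (omega0 k (n + 1)) := by
  intro r hr
  rw [ellipticSubalgebra_eq] at hr
  simp only [omega0_eq_single, coeff_neg_one_ofPowerSeries_mul_single_neg_two]
  simpa only [mul_comm] using hr.2

namespace IsRosenlichtRegular

variable {g : Fin (n + 1) → LaurentSeries k}

theorem coeff_eq_zero_of_lt (hg : IsRosenlichtRegular g) (i : Fin (n + 1)) {d : ℤ}
    (hd : d < -2) : (g i).coeff d = 0 := by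
  obtain ⟨e, rfl⟩ : ∃ e : ℕ, d = -1 - e := ⟨(-1 - d).toNat, by omega⟩
  have hmem : Pi.single i (X ^ e) ∈ ellipticSubalgebra k (n + 1) := by
    refine Algebra.subset_adjoin (Or.inr fun j => ?_)
    rcases eq_or_ne j i with rfl | hj
    · rw [Pi.single_eq_same]
      exact Ideal.pow_le_pow_right (by omega)
        (Ideal.pow_mem_pow (Ideal.mem_span_singleton_self X) e)
    · simp [hj]
  simpa [sum_coeff_ofPowerSeries_single_mul, coeff_single_mul] using hg _ hmem

theorem coeff_neg_two_castSucc_add_last (hg : IsRosenlichtRegular g) (i : Fin n) :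
    (g i.castSucc).coeff (-2) + (g (Fin.last n)).coeff (-2) = 0 := by
  simpa [add_mul, Finset.sum_add_distrib, sum_coeff_ofPowerSeries_single_mul, coeff_single_mul]
    using hg _ (single_add_single_mem_ellipticSubalgebra i)

theorem sum_coeff_neg_one (hg : IsRosenlichtRegular g) : ∑ i, (g i).coeff (-1) = 0 := by
  simpa using hg 1 (one_mem _)

theorem exists_eq_mul_omega0 (hg : IsRosenlichtRegular g) :
    ∃ r ∈ ellipticSubalgebra k (n + 1),
      g = fun i => ofPowerSeries ℤ k (r i) * omega0 k (n + 1) i := by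
  refine ⟨fun i => mk fun t => (ellipticSign n i)⁻¹ * (g i).coeff (t - 2), ?_, funext fun i => ?_⟩
  · rw [ellipticSubalgebra_eq]
    refine ⟨⟨-(g (Fin.last n)).coeff (-2), fun j => ?_⟩, ?_⟩
    · induction j using Fin.lastCases with
      | last => simp [ellipticSign]
      | cast j =>
        simp only [ellipticSign, (Fin.castSucc_lt_last j).ne, ↓reduceIte, inv_one, one_mul,
          constantCoeff_mk, CharP.cast_eq_zero, zero_sub, Int.reduceNeg]
        linear_combination hg.coeff_neg_two_castSucc_add_last j
    · simpa [coeff_mk, ← mul_assoc, mul_inv_cancel₀, ellipticSign_ne_zero]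
        using hg.sum_coeff_neg_one
  · rw [omega0_eq_single]
    exact eq_ofPowerSeries_mul_single_of_coeff_eq_zero (g i) 2 (ellipticSign_ne_zero i)
      fun d hd => hg.coeff_eq_zero_of_lt i hd

end IsRosenlichtRegular

end EllipticPoint

theorem stmt13_general (k : Type) [Field k] (m : ℕ) :
    (∀ r ∈ ellipticSubalgebra k m,
      ∑ i : Fin m,
        ((HahnSeries.ofPowerSeries ℤ k (r i)) * omega0 k m i).coeff (-1) = 0)
    ∧ (∀ g : Fin m → LaurentSeries k,
        (∀ r ∈ ellipticSubalgebra k m,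
          ∑ i : Fin m,
            ((HahnSeries.ofPowerSeries ℤ k (r i)) * g i).coeff (-1) = 0) →
        ∃ r ∈ ellipticSubalgebra k m,
          g = fun i : Fin m =>
            (HahnSeries.ofPowerSeries ℤ k (r i)) * omega0 k m i) := by
  cases m with
  | zero => exact ⟨fun _ _ => Finset.sum_of_isEmpty _, fun _ _ => ⟨0, zero_mem _, funext (·.elim0)⟩⟩
  | succ n =>
    exact ⟨isRosenlichtRegular_omega0, fun _ hg => IsRosenlichtRegular.exists_eq_mul_omega0 hg⟩

/-- For the elliptic `m`-fold point with `m ≥ 3`, the differential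
`ω₀ = dt₁/t₁² + ⋯ + dt_{m−1}/t_{m−1}² − dt_m/t_m²` satisfies
`∑ᵢ Res_{p_i}((π^*f)·ω₀) = 0` for every `f` in the local ring of `C` at `p`,
i.e. `ω₀` is a local generator of `ω_C` at the elliptic `m`-fold point: every
rational differential satisfying the residue condition is an `R`-multiple of
`ω₀`. -/
theorem stmt13 (k : Type) [Field k] [IsAlgClosed k] (m : ℕ) (hm : 3 ≤ m) :
    (∀ r ∈ ellipticSubalgebra k m,
      ∑ i : Fin m,
        ((HahnSeries.ofPowerSeries ℤ k (r i)) * omega0 k m i).coeff (-1) = 0)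
    ∧ (∀ g : Fin m → LaurentSeries k,
        (∀ r ∈ ellipticSubalgebra k m,
          ∑ i : Fin m,
            ((HahnSeries.ofPowerSeries ℤ k (r i)) * g i).coeff (-1) = 0) →
        ∃ r ∈ ellipticSubalgebra k m,
          g = fun i : Fin m =>
            (HahnSeries.ofPowerSeries ℤ k (r i)) * omega0 k m i) :=
  stmt13_general k m
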